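/- arXiv:2308.01977 — 6 statements merged into one kernel-verified Lean document; each statement's English description precedes it below -/
import Mathlib

section
/- Let T be a closed densely defined operator on a Hilbert space H. Then (1+T*T)^{-1/2} is a unitary operator from H onto dom T equipped with the graph inner product, and consequently the bounded transform T(1+T*T)^{-1/2} is a bounded operator on H with norm at most 1. -/
open scoped InnerProductSpace

/-- Weak characterization of the resolvent `(mu + T*T)⁻¹` of a closed densely
defined operator `T`: `R x` lies in `dom T` and satisfies
`⟪T (R x), T y⟫ + mu ⟪R x, y⟫ = ⟪x, y⟫` for all `y ∈ dom T`. -/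
def IsResolvent {E F : Type*} [NormedAddCommGroup E] [InnerProductSpace ℂ E]
    [NormedAddCommGroup F] [InnerProductSpace ℂ F]
    (T : E →ₗ.[ℂ] F) (mu : ℝ) (R : E →L[ℂ] E) : Prop :=
  ∀ x : E, ∃ h : R x ∈ T.domain,
    ∀ y : T.domain, ⟪T ⟨R x, h⟩, T y⟫_ℂ + (mu : ℂ) * ⟪R x, (y : E)⟫_ℂ = ⟪x, (y : E)⟫_ℂ

/-- `R` is the positive square root `(mu + T*T)^(-1/2)` of the resolvent:
`R` is self-adjoint, nonnegative, and `R * R` is the resolvent `(mu + T*T)⁻¹`. -/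
def IsSqrtResolvent {E F : Type*} [NormedAddCommGroup E] [InnerProductSpace ℂ E]
    [NormedAddCommGroup F] [InnerProductSpace ℂ F]
    (T : E →ₗ.[ℂ] F) (mu : ℝ) (R : E →L[ℂ] E) : Prop :=
  (∀ x y : E, ⟪R x, y⟫_ℂ = ⟪x, R y⟫_ℂ) ∧ (∀ x : E, 0 ≤ (⟪R x, x⟫_ℂ).re) ∧
    IsResolvent T mu (R * R)

/-!
Write `Q = R * R` for the resolvent. Testing the resolvent identity
`⟪T (Q x), T y⟫ + ⟪Q x, y⟫ = ⟪x, y⟫` against `y = Q x` gives `‖T (R (R x))‖ ≤ ‖R x‖`, so `T ∘ R`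
is bounded on the range of `R`, which is dense because `dom T` is. Since `T` is closed, `T ∘ R`
is then defined everywhere and equals a bounded operator `S`, and the conjugated identity,
extended by density, says that `R` is an isometry from `H` into `dom T` with the graph inner
product. For surjectivity, given `u ∈ dom T` let `w` represent (by Riesz) the functional
`x ↦ ⟪R x, u⟫ + ⟪S x, T u⟫`; then `v = u - R w` is graph-orthogonal to the range of `R`, in
particular to `Q v`, and the resolvent identity turns this into `‖v‖² = 0`.
-/

theorem norm_le_of_inner_self_add_inner_self_eq {𝕜 E F G : Type*} [RCLike 𝕜]
    [NormedAddCommGroup E] [InnerProductSpace 𝕜 E] [NormedAddCommGroup F] [InnerProductSpace 𝕜 F]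
    [NormedAddCommGroup G] [InnerProductSpace 𝕜 G] {a : E} {b : F} {c : G}
    (h : ⟪a, a⟫_𝕜 + ⟪b, b⟫_𝕜 = ⟪c, c⟫_𝕜) : ‖b‖ ≤ ‖c‖ := by
  have hre := congrArg RCLike.re h
  simp only [map_add, inner_self_eq_norm_sq] at hre
  exact le_of_sq_le_sq (by linarith [sq_nonneg ‖a‖]) (norm_nonneg c)

theorem LinearPMap.IsClosed.exists_mem_graph_of_denseRange {𝕜 E F G V : Type*}
    [NontriviallyNormedField 𝕜] [NormedAddCommGroup E] [NormedSpace 𝕜 E]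
    [NormedAddCommGroup F] [NormedSpace 𝕜 F] [CompleteSpace F]
    [NormedAddCommGroup G] [NormedSpace 𝕜 G] [AddCommGroup V] [Module 𝕜 V]
    {T : E →ₗ.[𝕜] F} (hT : T.IsClosed) (A : G →L[𝕜] E) {e : V →ₗ[𝕜] G} (he : DenseRange e)
    (hdom : ∀ v, A (e v) ∈ T.domain) {C : ℝ} (hbound : ∀ v, ‖T ⟨A (e v), hdom v⟩‖ ≤ C * ‖e v‖) :
    ∃ S : G →L[𝕜] F, ∀ x, (A x, S x) ∈ T.graph := by
  let f : V →ₗ[𝕜] F := T.toFun ∘ₗ LinearMap.codRestrict T.domain (A.toLinearMap ∘ₗ e) hdom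
  refine ⟨f.extendOfNorm e, fun x => he.induction_on x ?_ fun v => ?_⟩
  · exact hT.preimage (A.continuous.prodMk (f.extendOfNorm e).continuous)
  · rw [LinearMap.extendOfNorm_eq he ⟨C, hbound⟩]
    exact T.mem_graph ⟨A (e v), hdom v⟩

namespace IsResolvent

variable {E F : Type*} [NormedAddCommGroup E] [InnerProductSpace ℂ E]
  [NormedAddCommGroup F] [InnerProductSpace ℂ F] {T : E →ₗ.[ℂ] F}

theorem inner_add_inner {Q : E →L[ℂ] E} (hQ : IsResolvent T 1 Q) (x : E) (y : T.domain) :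
    ⟪T ⟨Q x, (hQ x).fst⟩, T y⟫_ℂ + ⟪Q x, (y : E)⟫_ℂ = ⟪x, (y : E)⟫_ℂ := by
  simpa using (hQ x).snd y

variable {R : E →L[ℂ] E}

theorem norm_apply_mul_self_le (hsymm : ∀ x y, ⟪R x, y⟫_ℂ = ⟪x, R y⟫_ℂ)
    (hres : IsResolvent T 1 (R * R)) (x : E) : ‖T ⟨R (R x), (hres x).fst⟩‖ ≤ ‖R x‖ := by
  refine norm_le_of_inner_self_add_inner_self_eq (𝕜 := ℂ) (a := R (R x)) ?_
  rw [add_comm, hsymm x (R x)]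
  exact hres.inner_add_inner x ⟨R (R x), (hres x).fst⟩

theorem denseRange_of_mul_self [CompleteSpace E] (hdense : Dense (T.domain : Set E))
    (hsymm : ∀ x y, ⟪R x, y⟫_ℂ = ⟪x, R y⟫_ℂ) (hres : IsResolvent T 1 (R * R)) :
    DenseRange R := by
  have hker : LinearMap.ker (R : E →ₗ[ℂ] E) = ⊥ := by
    refine (Submodule.eq_bot_iff _).2 fun z hz => (hdense.eq_zero_of_inner_left ℂ) fun v hv => ?_
    have hRz : R z = 0 := hz
    have hQz : (⟨(R * R) z, (hres z).fst⟩ : T.domain) = 0 := Subtype.ext (by simp [hRz])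
    have h := hres.inner_add_inner z ⟨v, hv⟩
    rw [hQz, T.map_zero] at h
    simpa [hRz] using h.symm
  have hclosure : (LinearMap.range (R : E →ₗ[ℂ] E)).topologicalClosure = ⊤ := by
    rw [Submodule.topologicalClosure_eq_top_iff,
      LinearMap.IsSymmetric.orthogonal_range hsymm, hker]
  have hdense_range := Submodule.dense_iff_topologicalClosure_eq_top.2 hclosure
  rw [LinearMap.coe_range] at hdense_range
  exact hdense_range

theorem exists_mem_graph_of_mul_self [CompleteSpace F] (hT : T.IsClosed)
    (hsymm : ∀ x y, ⟪R x, y⟫_ℂ = ⟪x, R y⟫_ℂ) (hres : IsResolvent T 1 (R * R))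
    (hdr : DenseRange R) : ∃ S : E →L[ℂ] F, ∀ x, (R x, S x) ∈ T.graph :=
  hT.exists_mem_graph_of_denseRange R (e := (R : E →ₗ[ℂ] E)) hdr (fun v => (hres v).fst)
    (C := 1) fun v => by simpa using hres.norm_apply_mul_self_le hsymm v

variable {S : E →L[ℂ] F}

theorem inner_apply_add_inner_of_mem_graph (hres : IsResolvent T 1 (R * R))
    (hS : ∀ x, (R x, S x) ∈ T.graph) (x : E) (y : T.domain) :
    ⟪S (R x), T y⟫_ℂ + ⟪R (R x), (y : E)⟫_ℂ = ⟪x, (y : E)⟫_ℂ := by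
  have hx : R (R x) ∈ T.domain := (hres x).fst
  rw [(T.image_iff hx).2 (hS (R x))]
  exact hres.inner_add_inner x y

theorem inner_add_inner_eq_of_mem_graph (hsymm : ∀ x y, ⟪R x, y⟫_ℂ = ⟪x, R y⟫_ℂ)
    (hres : IsResolvent T 1 (R * R)) (hdr : DenseRange R) (hS : ∀ x, (R x, S x) ∈ T.graph)
    (x y : E) : ⟪R x, R y⟫_ℂ + ⟪S x, S y⟫_ℂ = ⟪x, y⟫_ℂ := by
  refine hdr.induction_on y (isClosed_eq (by fun_prop) (by fun_prop)) fun w => ?_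
  have h := congrArg (starRingEnd ℂ) <| inner_apply_add_inner_of_mem_graph hres hS w
    ⟨R x, T.mem_domain_of_mem_graph (hS x)⟩
  rw [← (T.image_iff _).2 (hS x)] at h
  simpa only [map_add, inner_conj_symm, add_comm, hsymm x] using h

theorem exists_apply_eq_of_mem_graph [CompleteSpace E] [CompleteSpace F]
    (hsymm : ∀ x y, ⟪R x, y⟫_ℂ = ⟪x, R y⟫_ℂ) (hres : IsResolvent T 1 (R * R))
    (hdr : DenseRange R) (hS : ∀ x, (R x, S x) ∈ T.graph) (u : T.domain) : ∃ w, R w = u := by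
  let w := R u + ContinuousLinearMap.adjoint S (T u)
  let v : T.domain := u - ⟨R w, T.mem_domain_of_mem_graph (hS w)⟩
  have hTv : T v = T u - S w := by rw [T.map_sub, ← (T.image_iff _).2 (hS w)]
  have hv_perp : ∀ x, ⟪R x, (v : E)⟫_ℂ + ⟪S x, T v⟫_ℂ = 0 := fun x => by
    rw [hTv, Submodule.coe_sub, inner_sub_right, inner_sub_right, ← add_sub_add_comm,
      inner_add_inner_eq_of_mem_graph hsymm hres hdr hS, sub_eq_zero, inner_add_right,
      ← hsymm, ContinuousLinearMap.adjoint_inner_right]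
  have hv : (v : E) = 0 := by
    rw [← inner_self_eq_zero (𝕜 := ℂ), ← inner_apply_add_inner_of_mem_graph hres hS, add_comm]
    exact hv_perp (R v)
  exact ⟨w, (sub_eq_zero.1 hv).symm⟩

end IsResolvent

/-- For a closed densely defined operator `T` on a Hilbert space `H`,
the operator `(1+T*T)^(-1/2)` is a unitary from `H` onto `dom T` with the graph inner
product; consequently the bounded transform `T(1+T*T)^(-1/2)` is bounded with norm `≤ 1`. -/
theorem statement_0 {H : Type*} [NormedAddCommGroup H] [InnerProductSpace ℂ H]
    [CompleteSpace H] (T : H →ₗ.[ℂ] H)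
    (hdense : Dense (T.domain : Set H)) (hclosed : IsClosed (T.graph : Set (H × H)))
    (R : H →L[ℂ] H) (hR : IsSqrtResolvent T 1 R) :
    ∃ hmem : ∀ x : H, R x ∈ T.domain,
      (∀ x y : H,
        ⟪R x, R y⟫_ℂ + ⟪T ⟨R x, hmem x⟩, T ⟨R y, hmem y⟩⟫_ℂ = ⟪x, y⟫_ℂ) ∧
      Function.Surjective (fun x : H => (⟨R x, hmem x⟩ : T.domain)) ∧
      (∀ x : H, ‖T ⟨R x, hmem x⟩‖ ≤ ‖x‖) := by
  obtain ⟨hsymm, -, hres⟩ := hR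
  have hdr := hres.denseRange_of_mul_self hdense hsymm
  obtain ⟨S, hS⟩ := hres.exists_mem_graph_of_mul_self hclosed hsymm hdr
  have hmem x : R x ∈ T.domain := T.mem_domain_of_mem_graph (hS x)
  have hTS x : T ⟨R x, hmem x⟩ = S x := ((T.image_iff _).2 (hS x)).symm
  have hisom := hres.inner_add_inner_eq_of_mem_graph hsymm hdr hS
  refine ⟨hmem, fun x y => by simpa only [hTS] using hisom x y, fun u => ?_, fun x => ?_⟩
  · obtain ⟨w, hw⟩ := hres.exists_apply_eq_of_mem_graph hsymm hdr hS u
    exact ⟨w, Subtype.ext hw⟩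
  · rw [hTS]
    exact norm_le_of_inner_self_add_inner_self_eq (hisom x x)
end

section
/- Let T be a closed densely defined operator on a Hilbert space. Then for every x in the Hilbert space, (1+T*T)^{-1/2} x = (1/π) ∫₁^∞ (µ-1)^{-1/2} (µ+T*T)^{-1} x dµ, where the integral converges in norm. -/
open scoped InnerProductSpace

/-!
Write `B = (1 + T*T)⁻¹`. The resolvent identity gives `(1 + (mu - 1) B) (mu + T*T)⁻¹ = B`, so
`(mu + T*T)⁻¹ = B (1 + (mu - 1) B)⁻¹` is a continuous function of the bounded positive operator
`B`, and the square root `(1 + T*T)^(-1/2)` is `√B`. After substituting `mu = 1 + t²` the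
integral becomes `2 ∫₀^∞ B (1 + t² B)⁻¹ dt`, and the scalar identity
`∫₀^∞ r / (1 + t² r) dt = (π / 2) √r` for `r ≥ 0` passes through the continuous functional
calculus of `B` by dominated convergence, the integrand being bounded by
`(1 + max σ(B)) / (1 + t²)`.
-/

open MeasureTheory Set Real

namespace IsResolvent

variable {H : Type*} [NormedAddCommGroup H] [InnerProductSpace ℂ H]
  {T : H →ₗ.[ℂ] H} {mu nu : ℝ} {R R' : H →L[ℂ] H}

theorem inner_sub_inner (h : IsResolvent T mu R) (h' : IsResolvent T nu R') (x z : H) :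
    ⟪x, R' z⟫_ℂ - ⟪R x, z⟫_ℂ = ((mu - nu : ℝ) : ℂ) * ⟪R x, R' z⟫_ℂ := by
  obtain ⟨hx, Hx⟩ := h x
  obtain ⟨hz, Hz⟩ := h' z
  have e := congrArg (starRingEnd ℂ) (Hz ⟨R x, hx⟩)
  simp only [map_add, map_mul, inner_conj_symm, Complex.conj_ofReal] at e
  rw [← Hx ⟨R' z, hz⟩, ← e]
  push_cast
  ring

theorem inner_left_eq_inner_right (h : IsResolvent T mu R) (h' : IsResolvent T mu R') (x z : H) :
    ⟪R x, z⟫_ℂ = ⟪x, R' z⟫_ℂ := by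
  have e := h.inner_sub_inner h' x z
  rw [sub_self, Complex.ofReal_zero, zero_mul, sub_eq_zero] at e
  exact e.symm

theorem unique (h : IsResolvent T mu R) (h' : IsResolvent T mu R') : R = R' :=
  ContinuousLinearMap.ext fun z => ext_inner_left ℂ fun x => by
    rw [← h.inner_left_eq_inner_right h x z, h.inner_left_eq_inner_right h' x z]

theorem isSymmetric (h : IsResolvent T mu R) : (R : H →ₗ[ℂ] H).IsSymmetric :=
  h.inner_left_eq_inner_right h

theorem nonneg (h : IsResolvent T mu R) (hmu : 0 ≤ mu) : 0 ≤ R := by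
  rw [ContinuousLinearMap.nonneg_iff_isPositive]
  refine ⟨h.isSymmetric, fun x => ?_⟩
  obtain ⟨hx, Hx⟩ := h x
  have e := Hx ⟨R x, hx⟩
  rw [ContinuousLinearMap.reApplyInnerSelf_apply, inner_re_symm, ← e, RCLike.re_to_complex,
    Complex.add_re, Complex.re_ofReal_mul]
  exact add_nonneg (inner_self_nonneg (𝕜 := ℂ))
    (mul_nonneg hmu (inner_self_nonneg (𝕜 := ℂ) (x := R x)))

theorem one_add_smul_mul (h : IsResolvent T mu R) (h' : IsResolvent T nu R') :
    (1 + (mu - nu) • R') * R = R' := by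
  ext x
  refine ext_inner_right ℂ fun z => ?_
  have e := h.inner_sub_inner h' x z
  simp only [mul_apply_eq_comp, add_apply, one_apply_eq_self, smul_apply, inner_add_left,
    ← Complex.coe_smul, inner_smul_left, Complex.conj_ofReal, h'.inner_left_eq_inner_right h']
  linear_combination -e

end IsResolvent

theorem integral_Ioi_div_one_add_sq_mul {r : ℝ} (hr : 0 ≤ r) :
    ∫ t in Ioi (0 : ℝ), r / (1 + t ^ 2 * r) = π / 2 * √r := by
  rcases hr.eq_or_lt with rfl | hr
  · simp
  have hs : 0 < √r := sqrt_pos.mpr hr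
  have hsub : ∀ t : ℝ, r / (1 + t ^ 2 * r) = r * (1 + (√r * t) ^ 2)⁻¹ := fun t => by
    rw [mul_pow, sq_sqrt hr.le, div_eq_mul_inv, mul_comm r (t ^ 2)]
  simp_rw [hsub]
  rw [integral_const_mul, integral_comp_mul_left_Ioi (fun u => (1 + u ^ 2)⁻¹) 0 hs,
    mul_zero, integral_Ioi_inv_one_add_sq, arctan_zero, sub_zero, smul_eq_mul]
  nth_rw 1 [← mul_self_sqrt hr.le]
  field_simp

theorem div_one_add_sq_mul_le {r : ℝ} (hr : 0 ≤ r) (t : ℝ) :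
    r / (1 + t ^ 2 * r) ≤ (1 + r) * (1 + t ^ 2)⁻¹ := by
  rw [div_le_iff₀ (by positivity), ← div_eq_mul_inv, div_mul_eq_mul_div,
    le_div_iff₀ (by positivity)]
  nlinarith [mul_nonneg (mul_nonneg (sq_nonneg t) hr) hr]

theorem hasFiniteIntegral_inv_one_add_sq_const_mul (c : ℝ) :
    HasFiniteIntegral (fun t : ℝ => c * (1 + t ^ 2)⁻¹) (volume.restrict (Ioi 0)) :=
  (integrable_inv_one_add_sq.const_mul c).restrict.hasFiniteIntegral

section SubstitutionOneAddSq

variable {E : Type*} [NormedAddCommGroup E] [NormedSpace ℝ E]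

theorem image_one_add_sq_Ioi : (fun t : ℝ => 1 + t ^ 2) '' Ioi 0 = Ioi 1 := by
  ext m
  constructor
  · rintro ⟨t, ht, rfl⟩
    exact lt_add_of_pos_right 1 (pow_pos (mem_Ioi.mp ht) 2)
  · intro hm
    have hm' : 0 < m - 1 := sub_pos.mpr hm
    exact ⟨√(m - 1), sqrt_pos.mpr hm', by beta_reduce; rw [sq_sqrt hm'.le]; ring⟩

theorem injOn_one_add_sq_Ioi : InjOn (fun t : ℝ => 1 + t ^ 2) (Ioi 0) := fun _ ha _ hb hab =>
  (pow_left_inj₀ (le_of_lt ha) (le_of_lt hb) two_ne_zero).mp (add_left_cancel hab)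

theorem hasDerivWithinAt_one_add_sq (t : ℝ) :
    HasDerivWithinAt (fun s : ℝ => 1 + s ^ 2) (2 * t) (Ioi 0) t := by
  simpa using ((hasDerivAt_pow 2 t).const_add 1).hasDerivWithinAt

theorem abs_two_mul_smul_sub_one_rpow_smul {t : ℝ} (ht : 0 < t) (v : E) :
    |2 * t| • (((1 + t ^ 2) - 1) ^ (-(1 : ℝ) / 2) • v) = (2 : ℝ) • v := by
  rw [add_sub_cancel_left, ← rpow_natCast, ← rpow_mul ht.le, smul_smul, abs_of_pos (by positivity)]
  norm_num [rpow_neg_one, ht.ne']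

theorem integrableOn_Ioi_one_sub_one_rpow_smul_iff (f : ℝ → E) :
    IntegrableOn (fun mu : ℝ => (mu - 1) ^ (-(1 : ℝ) / 2) • f mu) (Ioi 1) ↔
      IntegrableOn (fun t : ℝ => f (1 + t ^ 2)) (Ioi 0) := by
  rw [← image_one_add_sq_Ioi, integrableOn_image_iff_integrableOn_abs_deriv_smul
    measurableSet_Ioi (fun t _ => hasDerivWithinAt_one_add_sq t) injOn_one_add_sq_Ioi]
  refine (integrableOn_congr_fun (fun t (ht : t ∈ Ioi 0) =>
    abs_two_mul_smul_sub_one_rpow_smul ht (f (1 + t ^ 2))) measurableSet_Ioi).trans ?_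
  exact integrable_smul_iff two_ne_zero _

theorem integral_Ioi_one_sub_one_rpow_smul (f : ℝ → E) :
    ∫ mu in Ioi 1, (mu - 1) ^ (-(1 : ℝ) / 2) • f mu = (2 : ℝ) • ∫ t in Ioi 0, f (1 + t ^ 2) := by
  rw [← image_one_add_sq_Ioi, integral_image_eq_integral_abs_deriv_smul
    measurableSet_Ioi (fun t _ => hasDerivWithinAt_one_add_sq t) injOn_one_add_sq_Ioi,
    setIntegral_congr_fun measurableSet_Ioi (fun t ht => abs_two_mul_smul_sub_one_rpow_smul ht _),
    integral_smul]

end SubstitutionOneAddSq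

section CStarAlgebra

variable {A : Type*} [CStarAlgebra A] [PartialOrder A] [StarOrderedRing A] {a : A}

theorem eq_cfc_div_one_add_mul_of_mul_eq {b : A} (ha : 0 ≤ a) {s : ℝ} (hs : 0 ≤ s)
    (h : (1 + s • a) * b = a) : b = cfc (fun r : ℝ => r / (1 + s * r)) a := by
  have hpos : ∀ r ∈ spectrum ℝ a, 0 < 1 + s * r := fun r hr =>
    add_pos_of_pos_of_nonneg one_pos (mul_nonneg hs (spectrum_nonneg_of_nonneg ha hr))
  have hcont : ContinuousOn (fun r : ℝ => r / (1 + s * r)) (spectrum ℝ a) :=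
    continuousOn_id.div (by fun_prop) fun r hr => (hpos r hr).ne'
  have hlin : cfc (fun r : ℝ => 1 + s * r) a = 1 + s • a := by
    rw [cfc_const_add .., cfc_const_mul .., cfc_id' .., map_one]
  have hunit : IsUnit (1 + s • a) :=
    hlin ▸ (isUnit_cfc_iff (fun r => 1 + s * r) a).mpr fun r hr => (hpos r hr).ne'
  refine hunit.mul_left_cancel ?_
  calc (1 + s • a) * b = a := h
    _ = cfc (fun r : ℝ => (1 + s * r) * (r / (1 + s * r))) a :=
      (cfc_id' ℝ a).symm.trans (cfc_congr fun r hr => (mul_div_cancel₀ r (hpos r hr).ne').symm)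
    _ = (1 + s • a) * cfc (fun r : ℝ => r / (1 + s * r)) a := by rw [cfc_mul .., hlin]

theorem continuousOn_uncurry_div_one_add_sq_mul (ha : 0 ≤ a) :
    ContinuousOn (Function.uncurry fun t r : ℝ => r / (1 + t ^ 2 * r))
      (univ ×ˢ spectrum ℝ a) := by
  refine continuousOn_snd.div (by fun_prop) fun p hp => ?_
  have := spectrum_nonneg_of_nonneg ha hp.2
  positivity

theorem norm_div_one_add_sq_mul_le (ha : 0 ≤ a) {M : ℝ} (hM : M ∈ upperBounds (spectrum ℝ a))
    (t : ℝ) : ∀ r ∈ spectrum ℝ a, ‖r / (1 + t ^ 2 * r)‖ ≤ (1 + M) * (1 + t ^ 2)⁻¹ :=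
  fun r hr => by
    have hr0 := spectrum_nonneg_of_nonneg ha hr
    rw [norm_of_nonneg (by positivity)]
    exact (div_one_add_sq_mul_le hr0 t).trans (by gcongr; exact hM hr)

theorem integrableOn_cfc_div_one_add_sq_mul (ha : 0 ≤ a) :
    IntegrableOn (fun t : ℝ => cfc (fun r : ℝ => r / (1 + t ^ 2 * r)) a) (Ioi 0) :=
  have ⟨M, hM⟩ := (ContinuousFunctionalCalculus.isCompact_spectrum (R := ℝ) a).bddAbove
  integrableOn_cfc measurableSet_Ioi _ _ a
    ((continuousOn_uncurry_div_one_add_sq_mul ha).mono (prod_mono (subset_univ _) le_rfl))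
    (.of_forall (norm_div_one_add_sq_mul_le ha hM)) (hasFiniteIntegral_inv_one_add_sq_const_mul _)

theorem integral_cfc_div_one_add_sq_mul (ha : 0 ≤ a) :
    ∫ t in Ioi (0 : ℝ), cfc (fun r : ℝ => r / (1 + t ^ 2 * r)) a = (π / 2) • CFC.sqrt a := by
  obtain ⟨M, hM⟩ := (ContinuousFunctionalCalculus.isCompact_spectrum (R := ℝ) a).bddAbove
  rw [← cfc_setIntegral measurableSet_Ioi _ _ a
    ((continuousOn_uncurry_div_one_add_sq_mul ha).mono (prod_mono (subset_univ _) le_rfl))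
    (.of_forall (norm_div_one_add_sq_mul_le ha hM)) (hasFiniteIntegral_inv_one_add_sq_const_mul _),
    cfc_congr fun r hr => integral_Ioi_div_one_add_sq_mul (spectrum_nonneg_of_nonneg ha hr),
    cfc_const_mul .., CFC.sqrt_eq_real_sqrt a, cfcₙ_eq_cfc]

end CStarAlgebra

theorem IsSqrtResolvent.eq_sqrt {H : Type*} [NormedAddCommGroup H] [InnerProductSpace ℂ H]
    [CompleteSpace H] {T : H →ₗ.[ℂ] H} {mu : ℝ} {S R : H →L[ℂ] H}
    (hS : IsSqrtResolvent T mu S) (hR : IsResolvent T mu R) : S = CFC.sqrt R := by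
  have hS0 : 0 ≤ S := by
    rw [ContinuousLinearMap.nonneg_iff_isPositive]
    exact ⟨hS.1, hS.2.1⟩
  exact (CFC.sqrt_unique (hS.2.2.unique hR)).symm

theorem statement_3_general {H : Type*} [NormedAddCommGroup H] [InnerProductSpace ℂ H]
    [CompleteSpace H] (T : H →ₗ.[ℂ] H)
    (R : ℝ → (H →L[ℂ] H)) (hR : ∀ mu : ℝ, 1 ≤ mu → IsResolvent T mu (R mu))
    (S : H →L[ℂ] H) (hS : IsSqrtResolvent T 1 S) :
    ∀ x : H,
      MeasureTheory.IntegrableOn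
        (fun mu : ℝ => ((mu - 1) ^ (-(1 : ℝ) / 2) : ℝ) • R mu x) (Set.Ioi 1) ∧
      S x = (1 / Real.pi) •
        ∫ mu in Set.Ioi (1 : ℝ), ((mu - 1) ^ (-(1 : ℝ) / 2) : ℝ) • R mu x := by
  intro x
  have hB := hR 1 le_rfl
  have hB0 : 0 ≤ R 1 := hB.nonneg zero_le_one
  have hRt : ∀ t : ℝ, R (1 + t ^ 2) = cfc (fun r : ℝ => r / (1 + t ^ 2 * r)) (R 1) := fun t =>
    eq_cfc_div_one_add_mul_of_mul_eq hB0 (sq_nonneg t) <| by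
      simpa only [add_sub_cancel_left] using
        (hR _ (le_add_of_nonneg_right (sq_nonneg t))).one_add_smul_mul hB
  have hint : IntegrableOn (fun t : ℝ => R (1 + t ^ 2)) (Ioi 0) := by
    simpa only [hRt] using integrableOn_cfc_div_one_add_sq_mul hB0
  have hval : ∫ t in Ioi (0 : ℝ), R (1 + t ^ 2) = (π / 2) • S := by
    simp_rw [hRt]
    rw [integral_cfc_div_one_add_sq_mul hB0, ← hS.eq_sqrt hB]
  refine ⟨(integrableOn_Ioi_one_sub_one_rpow_smul_iff _).mpr
    (hint.apply_continuousLinearMap x), ?_⟩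
  rw [integral_Ioi_one_sub_one_rpow_smul, ← ContinuousLinearMap.integral_apply hint, hval,
    smul_apply, smul_smul, smul_smul, show 1 / π * 2 * (π / 2) = 1 by field_simp, one_smul]

/-- For a closed densely defined operator `T` and any `x`,
`(1+T*T)^(-1/2) x = (1/π) ∫₁^∞ (mu-1)^(-1/2) (mu+T*T)⁻¹ x dmu` as a norm-convergent
(Bochner) integral. -/
theorem statement_3 {H : Type*} [NormedAddCommGroup H] [InnerProductSpace ℂ H]
    [CompleteSpace H] (T : H →ₗ.[ℂ] H)
    (hdense : Dense (T.domain : Set H)) (hclosed : IsClosed (T.graph : Set (H × H)))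
    (R : ℝ → (H →L[ℂ] H)) (hR : ∀ mu : ℝ, 1 ≤ mu → IsResolvent T mu (R mu))
    (S : H →L[ℂ] H) (hS : IsSqrtResolvent T 1 S) :
    ∀ x : H,
      MeasureTheory.IntegrableOn
        (fun mu : ℝ => ((mu - 1) ^ (-(1 : ℝ) / 2) : ℝ) • R mu x) (Set.Ioi 1) ∧
      S x = (1 / Real.pi) •
        ∫ mu in Set.Ioi (1 : ℝ), ((mu - 1) ^ (-(1 : ℝ) / 2) : ℝ) • R mu x :=
  statement_3_general T R hR S hS
end

section
/- Let P be a bounded idempotent operator on a Hilbert space H. Then the orthogonal projection onto the range of P equals PP*(1 + (P - P*)(P* - P))^{-1}. -/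
open scoped InnerProductSpace

/-! For an idempotent `P`, expanding the product gives `P* (1 + (P - P*)(P* - P)) = P* P P*`, and
`1 + (P - P*)(P* - P) = 1 + (P* - P)* (P* - P)` is invertible in the C⋆-algebra `B(H)`.
Hence `Q = P P* (1 + (P - P*)(P* - P))⁻¹` satisfies `P* Q = P*`, i.e. `x - Q x ∈ ker P* = (ran P)ᗮ`,
while `Q x ∈ ran P` because `Q` starts with a factor `P`. -/

lemma star_mul_one_add_sub_mul_sub_of_isIdempotentElem {R : Type*} [Ring R] [StarRing R] {p : R}
    (hp : IsIdempotentElem p) :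
    star p * (1 + (p - star p) * (star p - p)) = star p * p * star p := by
  have hp_star : star p * star p = star p := by rw [← star_mul, hp.eq]
  have expand : star p * (1 + (p - star p) * (star p - p)) =
      star p + (star p * p * star p - star p * (p * p) - star p * star p * star p
        + star p * star p * p) := by noncomm_ring
  rw [expand, hp.eq, hp_star, hp_star]
  abel

section CStarAlgebra

variable {A : Type*} [CStarAlgebra A] [PartialOrder A] [StarOrderedRing A]

lemma isUnit_one_add_sub_star_mul_star_sub (a : A) :
    IsUnit (1 + (a - star a) * (star a - a)) := by
  have h : a - star a = star (star a - a) := by simp [star_sub]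
  rw [h]
  exact (isStrictlyPositive_one.add_nonneg (star_mul_self_nonneg _)).isUnit

lemma star_mul_mul_star_mul_inverse_of_isIdempotentElem {p : A} (hp : IsIdempotentElem p) :
    star p * (p * star p * Ring.inverse (1 + (p - star p) * (star p - p))) = star p := by
  rw [← mul_assoc, ← mul_assoc, ← star_mul_one_add_sub_mul_sub_of_isIdempotentElem hp,
    mul_assoc, Ring.mul_inverse_cancel _ (isUnit_one_add_sub_star_mul_star_sub p), mul_one]

end CStarAlgebra

lemma ContinuousLinearMap.inner_sub_apply_apply_eq_zero_of_star_mul_eq {𝕜 E : Type*}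
    [RCLike 𝕜] [NormedAddCommGroup E] [InnerProductSpace 𝕜 E] [CompleteSpace E] {T Q : E →L[𝕜] E}
    (h : star T * Q = star T) (x y : E) : ⟪x - Q x, T y⟫_𝕜 = 0 := by
  rw [← adjoint_inner_left, ← star_eq_adjoint, map_sub, ← mul_apply_eq_comp, h, sub_self,
    inner_zero_left]

/-- For a bounded idempotent `P` on a Hilbert space `H`, the operator
`Q = P P* (1 + (P-P*)(P*-P))⁻¹` is the orthogonal projection onto `ran P`: for every
`x`, `Q x ∈ ran P` and `x - Q x ⊥ ran P`. -/
theorem statement_8 {H : Type*} [NormedAddCommGroup H] [InnerProductSpace ℂ H]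
    [CompleteSpace H] (P : H →L[ℂ] H) (hP : P * P = P)
    (Q : H →L[ℂ] H)
    (hQ : Q = P * star P * Ring.inverse (1 + (P - star P) * (star P - P))) :
    ∀ x : H, Q x ∈ LinearMap.range (P : H →ₗ[ℂ] H) ∧
      ∀ y ∈ LinearMap.range (P : H →ₗ[ℂ] H), ⟪x - Q x, y⟫_ℂ = 0 := by
  intro x
  refine ⟨?_, ?_⟩
  · rw [hQ, mul_assoc]
    exact ⟨_, rfl⟩
  · rintro y ⟨z, rfl⟩
    have hPQ : star P * Q = star P := hQ ▸ star_mul_mul_star_mul_inverse_of_isIdempotentElem hP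
    exact ContinuousLinearMap.inner_sub_apply_apply_eq_zero_of_star_mul_eq hPQ x z
end

section
/- Let P be a bounded idempotent on a Hilbert space H and a a bounded operator such that [a, P] and [a, P*] are compact. Then the commutator [a, P_{ran P}] of a with the orthogonal projection onto the range of P is compact. -/
lemma aux_isUnit_one_add_of_nonneg {A : Type*} [CStarAlgebra A] [PartialOrder A]
    [StarOrderedRing A] {s : A} (hs : 0 ≤ s) : IsUnit (1 + s) := by
  have h : (-1 : ℝ) ∉ spectrum ℝ s := fun h => by
    linarith [spectrum_nonneg_of_nonneg hs h]
  rw [spectrum.notMem_iff] at h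
  have := h.neg
  rw [add_comm]
  simpa [neg_sub, Algebra.algebraMap_eq_smul_one, sub_neg_eq_add] using this

section comm

variable {H : Type*} [NormedAddCommGroup H] [InnerProductSpace ℂ H] [CompleteSpace H]
variable (a : H →L[ℂ] H)

lemma aux_comm_mul {x y : H →L[ℂ] H}
    (hx : IsCompactOperator ⇑(a * x - x * a)) (hy : IsCompactOperator ⇑(a * y - y * a)) :
    IsCompactOperator ⇑(a * (x * y) - (x * y) * a) := by
  have key : a * (x * y) - (x * y) * a = (a * x - x * a) * y + x * (a * y - y * a) := by
    noncomm_ring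
  rw [key]
  have h1 : IsCompactOperator ⇑((a * x - x * a) * y) := hx.comp_clm y
  have h2 : IsCompactOperator ⇑(x * (a * y - y * a)) := hy.clm_comp x
  simpa [ContinuousLinearMap.coe_add'] using h1.add h2

lemma aux_comm_inv {n : H →L[ℂ] H} (hn : IsUnit n)
    (h : IsCompactOperator ⇑(a * n - n * a)) :
    IsCompactOperator ⇑(a * Ring.inverse n - Ring.inverse n * a) := by
  obtain ⟨u, rfl⟩ := hn
  have hinv : Ring.inverse (u : H →L[ℂ] H) = ↑u⁻¹ := Ring.inverse_unit u
  have key : a * ↑u⁻¹ - ↑u⁻¹ * a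
      = -(↑u⁻¹ * (a * ↑u - ↑u * a) * ↑u⁻¹ : H →L[ℂ] H) := by
    have e1 : (↑u⁻¹ * (a * ↑u) * ↑u⁻¹ : H →L[ℂ] H) = ↑u⁻¹ * a := by
      rw [← mul_assoc, Units.mul_inv_cancel_right]
    have e2 : (↑u⁻¹ * (↑u * a) * ↑u⁻¹ : H →L[ℂ] H) = a * ↑u⁻¹ := by
      rw [Units.inv_mul_cancel_left]
    rw [mul_sub, sub_mul, e1, e2, neg_sub]
  rw [hinv, key]
  have : IsCompactOperator ⇑((↑u⁻¹ : H →L[ℂ] H) * (a * ↑u - ↑u * a) * ↑u⁻¹) :=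
    ((h.comp_clm (↑u⁻¹ : H →L[ℂ] H)).clm_comp (↑u⁻¹ : H →L[ℂ] H))
  simpa [ContinuousLinearMap.coe_neg'] using this.neg

end comm

/-- Let `P` be a bounded idempotent on a Hilbert space and `a` a
bounded operator such that `[a,P]` and `[a,P*]` are compact. Then the commutator of
`a` with the orthogonal projection `Q = P P* (1+(P-P*)(P*-P))⁻¹` onto `ran P` is
compact. -/
theorem statement_9 {H : Type*} [NormedAddCommGroup H] [InnerProductSpace ℂ H]
    [CompleteSpace H] (P a : H →L[ℂ] H) (hP : P * P = P)
    (h1 : IsCompactOperator ⇑(a * P - P * a))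
    (h2 : IsCompactOperator ⇑(a * star P - star P * a))
    (Q : H →L[ℂ] H)
    (hQ : Q = P * star P * Ring.inverse (1 + (P - star P) * (star P - P))) :
    IsCompactOperator ⇑(a * Q - Q * a) := by
  set T : H →L[ℂ] H := star P - P with hT
  have hTT : (P - star P) * (star P - P) = star T * T := by
    simp [hT, star_sub, neg_sub]
  set N : H →L[ℂ] H := 1 + (P - star P) * (star P - P) with hN
  -- N is invertible
  have hNunit : IsUnit N := by
    rw [hN, hTT]
    exact aux_isUnit_one_add_of_nonneg (star_mul_self_nonneg T)
  -- commutator of a with T is compact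
  have hcommT : IsCompactOperator ⇑(a * T - T * a) := by
    have : a * T - T * a = (a * star P - star P * a) - (a * P - P * a) := by
      rw [hT]; noncomm_ring
    rw [this]
    exact h2.sub h1
  -- commutator of a with N is compact
  have hcommN : IsCompactOperator ⇑(a * N - N * a) := by
    have : a * N - N * a = a * (star T * T) - (star T * T) * a := by
      rw [hN, hTT]; noncomm_ring
    rw [this]
    have hcommTs : IsCompactOperator ⇑(a * star T - star T * a) := by
      have : a * star T - star T * a = (a * P - P * a) - (a * star P - star P * a) := by
        rw [hT, star_sub, star_star]; noncomm_ring
      rw [this]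
      exact h1.sub h2
    exact aux_comm_mul a hcommTs hcommT
  -- commutator with inverse
  have hcommNinv : IsCompactOperator ⇑(a * Ring.inverse N - Ring.inverse N * a) :=
    aux_comm_inv a hNunit hcommN
  rw [hQ, mul_assoc]
  exact aux_comm_mul a h1 (aux_comm_mul a h2 hcommNinv)
end

section
/- Let D be a closed densely defined operator on a Hilbert space and a a bounded operator preserving dom D with [D, a] bounded on dom D. Then for µ ≥ 1, the commutator [(µ+D*D)^{-1}, a], computed on the appropriate dense domain, equals -D*(µ+DD*)^{-1}[D,a](µ+D*D)^{-1} + ( D*(µ+DD*)^{-1}[D, a*](µ+D*D)^{-1} )*. -/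
open scoped InnerProductSpace

/-- Let `D` be closed densely defined, `a` bounded preserving `dom D`
(together with `a*`), with `[D,a]`, `[D,a*]` extending to bounded operators `B`, `B'`.
Then for `mu ≥ 1`, as bounded operators,
`[(mu+D*D)⁻¹, a] = - D*(mu+DD*)⁻¹ [D,a] (mu+D*D)⁻¹ + (D*(mu+DD*)⁻¹ [D,a*] (mu+D*D)⁻¹)*`,
stated weakly against all pairs of vectors. -/
theorem statement_12 {H : Type*} [NormedAddCommGroup H] [InnerProductSpace ℂ H]
    [CompleteSpace H] (D : H →ₗ.[ℂ] H)
    (hdense : Dense (D.domain : Set H)) (hclosed : IsClosed (D.graph : Set (H × H)))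
    (a : H →L[ℂ] H)
    (ha : ∀ x : H, x ∈ D.domain → a x ∈ D.domain)
    (ha' : ∀ x : H, x ∈ D.domain → star a x ∈ D.domain)
    (B B' : H →L[ℂ] H)
    (hB : ∀ x : D.domain, B (x : H) = D ⟨a (x : H), ha x x.2⟩ - a (D x))
    (hB' : ∀ x : D.domain, B' (x : H) = D ⟨star a (x : H), ha' x x.2⟩ - star a (D x))
    (mu : ℝ) (hmu : 1 ≤ mu) (R1 R2 : H →L[ℂ] H)
    (hR1 : IsResolvent D mu R1) (hR2 : IsResolvent D.adjoint mu R2) :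
    ∃ hm2 : ∀ z : H, R2 z ∈ D.adjoint.domain,
      ∀ x y : H,
        ⟪R1 (a x) - a (R1 x) + D.adjoint ⟨R2 (B (R1 x)), hm2 _⟩, y⟫_ℂ =
          ⟪x, D.adjoint ⟨R2 (B' (R1 y)), hm2 _⟩⟫_ℂ := by

  classical
  have hm1 : ∀ z : H, R1 z ∈ D.domain := fun z => (hR1 z).choose
  have hspec1 : ∀ z : H, ∀ y : D.domain,
      ⟪D ⟨R1 z, hm1 z⟩, D y⟫_ℂ + (mu : ℂ) * ⟪R1 z, (y : H)⟫_ℂ = ⟪z, (y : H)⟫_ℂ :=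
    fun z => (hR1 z).choose_spec
  have hm2 : ∀ z : H, R2 z ∈ D.adjoint.domain := fun z => (hR2 z).choose
  have hspec2 : ∀ z : H, ∀ y : D.adjoint.domain,
      ⟪D.adjoint ⟨R2 z, hm2 z⟩, D.adjoint y⟫_ℂ + (mu : ℂ) * ⟪R2 z, (y : H)⟫_ℂ
        = ⟪z, (y : H)⟫_ℂ :=
    fun z => (hR2 z).choose_spec
  have hfa : D.adjoint.IsFormalAdjoint D := LinearPMap.adjoint_isFormalAdjoint hdense
  -- `D (R1 y)` lies in the domain of the adjoint, with value `y - mu • R1 y`.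
  have hmemB : ∀ y : H, (D ⟨R1 y, hm1 y⟩ : H) ∈ D.adjoint.domain := by
    intro y
    apply D.mem_adjoint_domain_of_exists
    refine ⟨y - (mu : ℂ) • R1 y, fun p => ?_⟩
    have := hspec1 y p
    rw [inner_sub_left, inner_smul_left]
    rw [← this]
    ring_nf
    rw [Complex.conj_ofReal]
    ring
  have hvalB : ∀ y : H,
      D.adjoint ⟨(D ⟨R1 y, hm1 y⟩ : H), hmemB y⟩ = y - (mu : ℂ) • R1 y := by
    intro y
    apply LinearPMap.adjoint_apply_eq hdense
    intro p
    have := hspec1 y p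
    rw [inner_sub_left, inner_smul_left, ← this]
    ring_nf
    rw [Complex.conj_ofReal]
    ring
  -- Key identity (†): `⟪D† (R2 z), y⟫ = ⟪z, D (R1 y)⟫`.
  have hdag : ∀ z y : H,
      ⟪D.adjoint ⟨R2 z, hm2 z⟩, y⟫_ℂ = ⟪z, (D ⟨R1 y, hm1 y⟩ : H)⟫_ℂ := by
    intro z y
    have h2 := hspec2 z ⟨(D ⟨R1 y, hm1 y⟩ : H), hmemB y⟩
    rw [hvalB y] at h2
    have hadj : ⟪R2 z, (D ⟨R1 y, hm1 y⟩ : H)⟫_ℂ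
        = ⟪(D.adjoint ⟨R2 z, hm2 z⟩ : H), R1 y⟫_ℂ := by
      simpa using (hfa ⟨R2 z, hm2 z⟩ ⟨R1 y, hm1 y⟩).symm
    rw [hadj, inner_sub_right, inner_smul_right] at h2
    rw [← h2]; ring
  refine ⟨hm2, fun x y => ?_⟩
  -- abbreviations
  set ux : D.domain := ⟨R1 x, hm1 x⟩ with hux
  set uy : D.domain := ⟨R1 y, hm1 y⟩ with huy
  -- Term 1 : `⟪R1 (a x), y⟫`
  have ht1 : ⟪R1 (a x), y⟫_ℂ
      = ⟪(D ux : H), (D ⟨star a (R1 y), ha' _ (hm1 y)⟩ : H)⟫_ℂ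
        + (mu : ℂ) * ⟪a (R1 x), R1 y⟫_ℂ := by
    -- first, symmetry of R1 : ⟪R1 (a x), y⟫ = ⟪a x, R1 y⟫
    have hsym : ⟪R1 (a x), y⟫_ℂ = ⟪a x, R1 y⟫_ℂ := by
      have h1 := hspec1 (a x) ⟨R1 y, hm1 y⟩
      have h2 := hspec1 y ⟨R1 (a x), hm1 (a x)⟩
      have h2' := congrArg (starRingEnd ℂ) h2
      simp only [map_add, map_mul, inner_conj_symm, Complex.conj_ofReal] at h2'
      rw [← h1, ← h2']
    rw [hsym]
    have hax : ⟪a x, R1 y⟫_ℂ = ⟪x, star a (R1 y)⟫_ℂ := by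
      rw [ContinuousLinearMap.star_eq_adjoint, ContinuousLinearMap.adjoint_inner_right]
    have h1 := hspec1 x ⟨star a (R1 y), ha' _ (hm1 y)⟩
    have harx : ⟪R1 x, star a (R1 y)⟫_ℂ = ⟪a (R1 x), R1 y⟫_ℂ := by
      rw [ContinuousLinearMap.star_eq_adjoint, ContinuousLinearMap.adjoint_inner_right]
    rw [hax, ← h1, harx]
  -- Term 2 : `⟪a (R1 x), y⟫`
  have ht2 : ⟪a (R1 x), y⟫_ℂ
      = ⟪(D ⟨a (R1 x), ha _ (hm1 x)⟩ : H), (D uy : H)⟫_ℂ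
        + (mu : ℂ) * ⟪a (R1 x), R1 y⟫_ℂ := by
    have h1 := hspec1 y ⟨a (R1 x), ha _ (hm1 x)⟩
    have h1' := congrArg (starRingEnd ℂ) h1
    simp only [map_add, map_mul, inner_conj_symm, Complex.conj_ofReal] at h1'
    rw [← h1']
  -- Term 3 : `⟪D† (R2 (B (R1 x))), y⟫ = ⟪B (R1 x), D uy⟫`
  have ht3 : ⟪(D.adjoint ⟨R2 (B (R1 x)), hm2 _⟩ : H), y⟫_ℂ
      = ⟪B (R1 x), (D uy : H)⟫_ℂ := hdag _ y
  -- RHS : `⟪x, D† (R2 (B' (R1 y)))⟫ = ⟪D ux, B' (R1 y)⟫`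
  have hrhs : ⟪x, (D.adjoint ⟨R2 (B' (R1 y)), hm2 _⟩ : H)⟫_ℂ
      = ⟪(D ux : H), B' (R1 y)⟫_ℂ := by
    rw [← inner_conj_symm, hdag (B' (R1 y)) x, ← inner_conj_symm ((D ux : H)) (B' (R1 y))]
  -- Commutator relations
  have hBx : (D ⟨a (R1 x), ha _ (hm1 x)⟩ : H) = B (R1 x) + a (D ux : H) := by
    rw [hB ux, sub_add_cancel]
  have hB'y : (D ⟨star a (R1 y), ha' _ (hm1 y)⟩ : H) = B' (R1 y) + star a (D uy : H) := by
    rw [hB' uy, sub_add_cancel]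
  rw [inner_add_left, inner_sub_left, ht1, ht2, ht3, hrhs, hBx, hB'y]
  rw [inner_add_right, inner_add_left, ContinuousLinearMap.star_eq_adjoint,
    ContinuousLinearMap.adjoint_inner_right]
  ring
end

section
/- Let T be a closed densely defined operator on a Hilbert space with polar decomposition T = V|T| (ker V = ker T), and let F = T(1+T*T)^{-1/2}. Then V - F = V(1+|F|)^{-1}(1 - F*F), where |F| = (F*F)^{1/2}. -/
open scoped InnerProductSpace

/-- Let `T` be closed densely defined with polar decomposition
`T = V|T|` (`ker V = ker T`), and `F = T (1+T*T)^(-1/2)` the bounded transform, so that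
`F = V |F|` with `|F| = (F*F)^(1/2)`. Then `V - F = V (1+|F|)⁻¹ (1-F*F)`. -/
theorem statement_17 {H : Type*} [NormedAddCommGroup H] [InnerProductSpace ℂ H]
    [CompleteSpace H] (T : H →ₗ.[ℂ] H)
    (hdense : Dense (T.domain : Set H)) (hclosed : IsClosed (T.graph : Set (H × H)))
    (S F V : H →L[ℂ] H) (hS : IsSqrtResolvent T 1 S)
    (hmem : ∀ x : H, S x ∈ T.domain) (hF : ∀ x : H, F x = T ⟨S x, hmem x⟩)
    (hpolar : F = V * cfc (fun t : ℝ => Real.sqrt t) (star F * F))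
    (hker : ∀ x : H, V x = 0 ↔ ∃ hx : x ∈ T.domain, T ⟨x, hx⟩ = 0) :
    V - F = V * Ring.inverse (1 + cfc (fun t : ℝ => Real.sqrt t) (star F * F)) *
      (1 - star F * F) := by
  set a := star F * F with ha_def
  have ha : (0 : H →L[ℂ] H) ≤ a := star_mul_self_nonneg F
  have hsa : IsSelfAdjoint a := by rw [ha_def]; exact IsSelfAdjoint.star_mul_self F
  set A := cfc (fun t : ℝ => Real.sqrt t) a with hA_def
  have hc : ContinuousOn (fun t : ℝ => Real.sqrt t) (spectrum ℝ a) :=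
    Real.continuous_sqrt.continuousOn
  have hA2 : A * A = a := by
    rw [hA_def, ← cfc_mul _ _ a hc hc]
    calc cfc (fun t : ℝ => Real.sqrt t * Real.sqrt t) a
        = cfc (id : ℝ → ℝ) a := by
          apply cfc_congr
          intro t ht
          exact Real.mul_self_sqrt (spectrum_nonneg_of_nonneg ha ht)
      _ = a := cfc_id ℝ a
  have hUnit : IsUnit (1 + A) := by
    have h1 : (1 : H →L[ℂ] H) + A = cfc (fun t : ℝ => 1 + Real.sqrt t) a := by
      rw [cfc_const_add 1 (fun t : ℝ => Real.sqrt t) a hc hsa]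
      rw [Algebra.algebraMap_eq_smul_one, one_smul]
    rw [h1]
    apply isUnit_cfc _ _ (by fun_prop) hsa
    intro t ht
    have := Real.sqrt_nonneg t
    positivity
  calc V - F = V * (1 - A) := by rw [mul_sub, mul_one, ← hpolar]
    _ = V * (Ring.inverse (1 + A) * (1 + A)) * (1 - A) := by
        rw [Ring.inverse_mul_cancel _ hUnit, mul_one]
    _ = V * Ring.inverse (1 + A) * ((1 + A) * (1 - A)) := by
        rw [mul_assoc, mul_assoc, mul_assoc]
    _ = V * Ring.inverse (1 + A) * (1 - a) := by
        rw [← hA2]; congr 1; noncomm_ring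
end
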